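/- arXiv:1810.08687 — 2 statements merged into one kernel-verified Lean document; each statement's English description precedes it below -/
import Mathlib

section
/- Let p, q, k, l, m be positive integers with gcd(p, q) = 1. Then the number of pairs (α, β) ∈ ℤ² with 0 ≤ α < k + l, 0 ≤ β < l + m, and gcd(k + l, l + m, p·β − q·α) = 1 equals (k + l)·(l + m)·φ(g)/g, where g = gcd(k + l, l + m). -/
/-!
The condition on `(α, β)` only depends on `(α, β)` modulo `g`, and `g` divides both side lengths,
so the box is tiled by `(k + l)(l + m) / g²` copies of `(ℤ/g)²`. Writing `u p + v q = 1`, the map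
`(a, b) ↦ (p b - q a, u a + v b)` is a bijection of `(ℤ/g)²`, so `p b - q a` is a unit for exactly
`g · φ(g)` residue pairs.
-/

open Finset

theorem ZMod.card_filter_Ico_intCast_eq (c : ℤ) (a n : ℕ) [NeZero n] (s : ZMod n) :
    #{x ∈ Ico c (c + a * n) | ((x : ℤ) : ZMod n) = s} = a := by
  have hn : (0 : ℤ) < n := by exact_mod_cast NeZero.pos n
  have hshift : (((c + a * n : ℤ) : ℚ) - (s.cast : ℤ)) / ((n : ℤ) : ℚ) =
      ((c : ℚ) - (s.cast : ℤ)) / ((n : ℤ) : ℚ) + a := by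
    have : (n : ℚ) ≠ 0 := Nat.cast_ne_zero.mpr (NeZero.ne n)
    push_cast
    field_simp
    ring
  have hmodEq (x : ℤ) : (x : ZMod n) = s ↔ x ≡ s.cast [ZMOD n] := by
    rw [← ZMod.intCast_eq_intCast_iff, ZMod.intCast_zmod_cast]
  simp only [hmodEq]
  rw [← Nat.cast_inj (R := ℤ), Int.Ico_filter_modEq_card _ _ hn, hshift, Int.ceil_add_natCast]
  simp

theorem ZMod.card_filter_Ico_prod_Ico (c d : ℤ) (a b n : ℕ) [NeZero n]
    (P : ZMod n × ZMod n → Prop) [DecidablePred P] :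
    #{v ∈ Ico c (c + a * n) ×ˢ Ico d (d + b * n) | P ((v.1 : ZMod n), (v.2 : ZMod n))} =
      a * b * #{s | P s} := by
  rw [card_eq_sum_card_fiberwise (f := fun v : ℤ × ℤ => ((v.1 : ZMod n), (v.2 : ZMod n)))
    (t := {s | P s}) (fun v hv => by simpa using (mem_filter.mp hv).2),
    sum_const_nat (m := a * b), mul_comm]
  intro s hs
  have hfiber (v : ℤ × ℤ) : (P ((v.1 : ZMod n), (v.2 : ZMod n)) ∧
      ((v.1 : ZMod n), (v.2 : ZMod n)) = s) ↔ (v.1 : ZMod n) = s.1 ∧ (v.2 : ZMod n) = s.2 := by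
    rw [and_iff_right_of_imp fun h => h ▸ (mem_filter.mp hs).2, Prod.ext_iff]
  rw [filter_filter, filter_congr fun v _ => hfiber v,
    filter_product (fun x : ℤ => (x : ZMod n) = s.1) (fun y : ℤ => (y : ZMod n) = s.2),
    card_product, ZMod.card_filter_Ico_intCast_eq, ZMod.card_filter_Ico_intCast_eq]

theorem IsCoprime.card_filter_isUnit_mul_sub_mul {R : Type*} [CommRing R] [Fintype R]
    [DecidablePred (IsUnit : R → Prop)] {p q : R} (h : IsCoprime p q) :
    #{v : R × R | IsUnit (p * v.2 - q * v.1)} = Fintype.card R * #{x : R | IsUnit x} := by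
  obtain ⟨u, v, huv⟩ := h
  let shear : R × R ≃ R × R :=
    { toFun := fun w => (p * w.2 - q * w.1, u * w.1 + v * w.2)
      invFun := fun w => (p * w.2 - v * w.1, u * w.1 + q * w.2)
      left_inv := fun w => by
        ext
        · dsimp; linear_combination w.1 * huv
        · dsimp; linear_combination w.2 * huv
      right_inv := fun w => by
        ext
        · dsimp; linear_combination w.1 * huv
        · dsimp; linear_combination w.2 * huv }
  rw [card_equiv shear (t := {w : R × R | IsUnit w.1}) (fun w => by simp [shear]),
    ← univ_product_univ, filter_product_left, card_product, card_univ, mul_comm]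

theorem ZMod.card_filter_isUnit (n : ℕ) [NeZero n] [DecidablePred (IsUnit : ZMod n → Prop)] :
    #{x : ZMod n | IsUnit x} = Nat.totient n := by
  rw [← ZMod.card_units_eq_totient, ← card_univ,
    ← card_map ⟨Units.val, Units.val_injective⟩]
  congr 1
  ext x
  simp [IsUnit, eq_comm]

theorem count_shear_pairs_diagram_C_general (p q k l m : ℕ) (hl : 0 < l) (hpq : Nat.gcd p q = 1) :
    (((Finset.Ico (0 : ℤ) ((k : ℤ) + l) ×ˢ Finset.Ico (0 : ℤ) ((l : ℤ) + m)).filter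
      (fun v => Int.gcd (Nat.gcd (k + l) (l + m) : ℤ)
        ((p : ℤ) * v.2 - (q : ℤ) * v.1) = 1)).card : ℚ)
    = ((k + l) * (l + m) * Nat.totient (Nat.gcd (k + l) (l + m)) : ℚ) /
        (Nat.gcd (k + l) (l + m) : ℚ) := by
  set g := Nat.gcd (k + l) (l + m)
  have : NeZero g := ⟨(Nat.gcd_pos_of_pos_left _ (by omega)).ne'⟩
  obtain ⟨a, ha⟩ : g ∣ k + l := Nat.gcd_dvd_left _ _
  obtain ⟨b, hb⟩ : g ∣ l + m := Nat.gcd_dvd_right _ _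
  have hpq' : IsCoprime (p : ZMod g) (q : ZMod g) := by
    simpa using (Nat.isCoprime_iff_coprime.mpr hpq).map (Int.castRingHom (ZMod g))
  have hunit (x : ℤ) : Int.gcd g x = 1 ↔ IsUnit (x : ZMod g) := by
    rw [ZMod.coe_int_isUnit_iff_isCoprime, Int.isCoprime_iff_gcd_eq_one]
  have hbox : (k : ℤ) + l = 0 + a * g ∧ (l : ℤ) + m = 0 + b * g := by
    constructor <;> push_cast [← Nat.cast_add, ha, hb] <;> ring
  have hcount : #{v ∈ Ico (0 : ℤ) ((k : ℤ) + l) ×ˢ Ico 0 ((l : ℤ) + m) |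
      Int.gcd g ((p : ℤ) * v.2 - q * v.1) = 1} = a * b * (g * Nat.totient g) := by
    simp only [hunit, Int.cast_sub, Int.cast_mul, Int.cast_natCast]
    rw [hbox.1, hbox.2, ZMod.card_filter_Ico_prod_Ico 0 0 a b g
      (fun s => IsUnit ((p : ZMod g) * s.2 - q * s.1)), hpq'.card_filter_isUnit_mul_sub_mul,
      ZMod.card, ZMod.card_filter_isUnit]
  rw [hcount, eq_div_iff (Nat.cast_ne_zero.mpr (NeZero.ne g))]
  push_cast [← Nat.cast_add, ha, hb]
  ring

theorem count_shear_pairs_diagram_C (p q k l m : ℕ) (hp : 0 < p) (hq : 0 < q) (hk : 0 < k)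
    (hl : 0 < l) (hm : 0 < m) (hpq : Nat.gcd p q = 1) :
    (((Finset.Ico (0 : ℤ) ((k : ℤ) + l) ×ˢ Finset.Ico (0 : ℤ) ((l : ℤ) + m)).filter
      (fun v => Int.gcd (Nat.gcd (k + l) (l + m) : ℤ)
        ((p : ℤ) * v.2 - (q : ℤ) * v.1) = 1)).card : ℚ)
    = ((k + l) * (l + m) * Nat.totient (Nat.gcd (k + l) (l + m)) : ℚ) /
        (Nat.gcd (k + l) (l + m) : ℚ) :=
  count_shear_pairs_diagram_C_general p q k l m hl hpq
end

section
/- For every positive integer n, the sum of k·l² over all quadruples (p, q, k, l) of positive integers with k > l and p·k + q·l = n equals (1/24)·σ₄(n) + (1/2)·σ₃(n) − ((12·n + 1)/24)·σ₂(n). -/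
/-- Divisor function `σ_k(n) = ∑_{d ∣ n} d^k`. -/
def sigmaFn (k n : ℕ) : ℕ := ∑ d ∈ n.divisors, d ^ k

/-!
Liouville's method. Let `Ω` be the set of positive `(a, b, x, y)` with `a x + b y = n`. Split the
sum of `x y²` over `Ω` once by comparing `x` with `y` and once by comparing `a` with `b`. The
involution `(a, b, x, y) ↦ (b, a, y, x)` of `Ω` folds each split onto one off-diagonal region, and
the shear `(a, b, x, y) ↦ (a, a + b, x - y, y)`, a bijection from `{y < x}` onto `{a < b}`,
expresses both splits through sums over `{a < b}`. Comparing them leaves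
`2 ∑_{y < x} x y² = ∑_{a = b} x y² - ∑_{x = y} x y²`. On `{a = b}` the point is `a ∣ n` together
with a composition `x + y = n / a`, which gives `(σ₄ - σ₂) / 12`; the map
`(a, b, x, y) ↦ (x, y, a, b)` carries `{x = y}` onto `{a = b}`, which gives `n σ₂ - σ₃`.
-/

open Finset Function

theorem Finset.sum_eq_sum_filter_lt_add_sum_filter_eq_add_sum_filter_gt {α β M : Type*}
    [LinearOrder β] [AddCommMonoid M] (s : Finset α) (c d : α → β) (f : α → M) :
    ∑ v ∈ s, f v = ∑ v ∈ s with c v < d v, f v + ∑ v ∈ s with c v = d v, f v +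
      ∑ v ∈ s with d v < c v, f v := by
  have h_eq : s.filter (fun v => ¬ c v < d v ∧ c v = d v) = s.filter (fun v => c v = d v) :=
    filter_congr fun v _ => ⟨And.right, fun h => ⟨h.not_lt, h⟩⟩
  have h_gt : s.filter (fun v => ¬ c v < d v ∧ ¬ c v = d v) = s.filter (fun v => d v < c v) :=
    filter_congr fun v _ => by rw [not_lt, ← lt_iff_le_and_ne']
  rw [← sum_filter_add_sum_filter_not s (fun v => c v < d v), add_assoc,
    ← sum_filter_add_sum_filter_not (s.filter fun v => ¬ c v < d v) (fun v => c v = d v),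
    filter_filter, filter_filter, h_eq, h_gt]

namespace Liouville

/-- The positive solutions `(a, b, x, y)` of `a * x + b * y = n`. -/
def solutions (n : ℕ) : Finset (ℕ × ℕ × ℕ × ℕ) :=
  (Icc 1 n ×ˢ Icc 1 n ×ˢ Icc 1 n ×ˢ Icc 1 n).filter fun v => v.1 * v.2.2.1 + v.2.1 * v.2.2.2 = n

theorem mem_solutions {n : ℕ} {v : ℕ × ℕ × ℕ × ℕ} :
    v ∈ solutions n ↔ 0 < v.1 ∧ 0 < v.2.1 ∧ 0 < v.2.2.1 ∧ 0 < v.2.2.2 ∧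
      v.1 * v.2.2.1 + v.2.1 * v.2.2.2 = n := by
  obtain ⟨a, b, x, y⟩ := v
  simp only [solutions, mem_filter, mem_product, mem_Icc]
  constructor
  · rintro ⟨⟨⟨ha, -⟩, ⟨hb, -⟩, ⟨hx, -⟩, hy, -⟩, h⟩
    exact ⟨ha, hb, hx, hy, h⟩
  · rintro ⟨ha, hb, hx, hy, rfl⟩
    have := Nat.le_mul_of_pos_right a hx
    have := Nat.le_mul_of_pos_right b hy
    have := Nat.le_mul_of_pos_left x ha
    have := Nat.le_mul_of_pos_left y hb
    refine ⟨⟨⟨ha, ?_⟩, ⟨hb, ?_⟩, ⟨hx, ?_⟩, hy, ?_⟩, rfl⟩ <;> omega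

abbrev swap (v : ℕ × ℕ × ℕ × ℕ) : ℕ × ℕ × ℕ × ℕ := (v.2.1, v.1, v.2.2.2, v.2.2.1)

abbrev transpose (v : ℕ × ℕ × ℕ × ℕ) : ℕ × ℕ × ℕ × ℕ := (v.2.2.1, v.2.2.2, v.1, v.2.1)

theorem swap_involutive : Involutive swap := fun _ => rfl

theorem transpose_involutive : Involutive transpose := fun _ => rfl

theorem swap_mem_solutions {n : ℕ} {v : ℕ × ℕ × ℕ × ℕ} :
    swap v ∈ solutions n ↔ v ∈ solutions n := by
  simp only [mem_solutions, swap]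
  constructor <;> rintro ⟨h1, h2, h3, h4, h⟩ <;> exact ⟨h2, h1, h4, h3, by rw [← h]; ring⟩

theorem transpose_mem_solutions {n : ℕ} {v : ℕ × ℕ × ℕ × ℕ} :
    transpose v ∈ solutions n ↔ v ∈ solutions n := by
  simp only [mem_solutions, transpose]
  constructor <;> rintro ⟨h1, h2, h3, h4, h⟩ <;> exact ⟨h3, h4, h1, h2, by rw [← h]; ring⟩

variable {M : Type*} [AddCommMonoid M]

theorem sum_filter_solutions_comp {n : ℕ} {e : ℕ × ℕ × ℕ × ℕ → ℕ × ℕ × ℕ × ℕ} (he : Involutive e)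
    (hmem : ∀ v, e v ∈ solutions n ↔ v ∈ solutions n) (p : ℕ × ℕ × ℕ × ℕ → Prop) [DecidablePred p]
    (f : ℕ × ℕ × ℕ × ℕ → M) :
    ∑ v ∈ solutions n with p v, f v = ∑ v ∈ solutions n with p (e v), f (e v) := by
  refine sum_nbij' e e ?_ ?_ (fun v _ => he v) (fun v _ => he v) (fun v _ => by rw [he v])
  · intro v hv
    simp only [mem_filter, hmem, he v] at hv ⊢
    exact hv
  · intro v hv
    simp only [mem_filter, hmem] at hv ⊢
    exact hv

theorem sum_filter_solutions_swap (n : ℕ) (p : ℕ × ℕ × ℕ × ℕ → Prop) [DecidablePred p]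
    (f : ℕ × ℕ × ℕ × ℕ → M) :
    ∑ v ∈ solutions n with p v, f v = ∑ v ∈ solutions n with p (swap v), f (swap v) :=
  sum_filter_solutions_comp swap_involutive (fun _ => swap_mem_solutions) p f

theorem sum_filter_solutions_transpose (n : ℕ) (p : ℕ × ℕ × ℕ × ℕ → Prop) [DecidablePred p]
    (f : ℕ × ℕ × ℕ × ℕ → M) :
    ∑ v ∈ solutions n with p v, f v = ∑ v ∈ solutions n with p (transpose v), f (transpose v) :=
  sum_filter_solutions_comp transpose_involutive (fun _ => transpose_mem_solutions) p f

theorem sum_filter_vars_gt_eq_sum_filter_coeffs_lt (n : ℕ) (g : ℕ → ℕ → M) :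
    ∑ v ∈ solutions n with v.2.2.2 < v.2.2.1, g v.2.2.1 v.2.2.2 =
      ∑ v ∈ solutions n with v.1 < v.2.1, g (v.2.2.1 + v.2.2.2) v.2.2.2 := by
  refine sum_nbij' (fun v => (v.1, v.1 + v.2.1, v.2.2.1 - v.2.2.2, v.2.2.2))
    (fun w => (w.1, w.2.1 - w.1, w.2.2.1 + w.2.2.2, w.2.2.2)) ?_ ?_ ?_ ?_ ?_
  · rintro ⟨a, b, x, y⟩ hv
    simp only [mem_filter, mem_solutions] at hv ⊢
    obtain ⟨⟨ha, hb, hx, hy, rfl⟩, hyx⟩ := hv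
    refine ⟨⟨ha, by omega, by omega, hy, ?_⟩, by omega⟩
    obtain ⟨k, rfl⟩ := Nat.exists_eq_add_of_le hyx.le
    rw [Nat.add_sub_cancel_left]
    ring
  · rintro ⟨a, b, x, y⟩ hv
    simp only [mem_filter, mem_solutions] at hv ⊢
    obtain ⟨⟨ha, hb, hx, hy, rfl⟩, hab⟩ := hv
    refine ⟨⟨ha, by omega, by omega, hy, ?_⟩, by omega⟩
    obtain ⟨k, rfl⟩ := Nat.exists_eq_add_of_le hab.le
    rw [Nat.add_sub_cancel_left]
    ring
  · rintro ⟨a, b, x, y⟩ hv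
    simp only [mem_filter, mem_solutions] at hv
    simp only [Prod.mk.injEq, true_and, and_true]
    omega
  · rintro ⟨a, b, x, y⟩ hv
    simp only [mem_filter, mem_solutions] at hv
    simp only [Prod.mk.injEq, true_and, and_true]
    omega
  · rintro ⟨a, b, x, y⟩ hv
    simp only [mem_filter] at hv
    simp only [Nat.sub_add_cancel hv.2.le]

theorem sum_filter_coeffs_eq_eq_sum_divisors (n : ℕ) (f : ℕ × ℕ × ℕ × ℕ → M) :
    ∑ v ∈ solutions n with v.1 = v.2.1, f v =
      ∑ d ∈ n.divisors, ∑ i ∈ Ioo 0 (n / d), f (d, d, i, n / d - i) := by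
  have h_left_inv : ∀ v ∈ (solutions n).filter (fun v => v.1 = v.2.1),
      (v.1, v.1, v.2.2.1, n / v.1 - v.2.2.1) = v := by
    rintro ⟨a, b, x, y⟩ hv
    simp only [mem_filter, mem_solutions] at hv
    obtain ⟨⟨ha, -, -, -, rfl⟩, rfl⟩ := hv
    simp only [← mul_add, Nat.mul_div_cancel_left _ ha, Nat.add_sub_cancel_left]
  rw [sum_sigma']
  refine sum_nbij' (fun v => ⟨v.1, v.2.2.1⟩) (fun p => (p.1, p.1, p.2, n / p.1 - p.2))
    ?_ ?_ h_left_inv (fun _ _ => rfl) fun v hv => by rw [h_left_inv v hv]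
  · rintro ⟨a, b, x, y⟩ hv
    simp only [mem_filter, mem_solutions] at hv
    obtain ⟨⟨ha, -, hx, hy, rfl⟩, rfl⟩ := hv
    simp only [mem_sigma, Nat.mem_divisors, mem_Ioo, ← mul_add,
      Nat.mul_div_cancel_left _ ha]
    exact ⟨⟨dvd_mul_right _ _, by positivity⟩, hx, by omega⟩
  · rintro ⟨d, i⟩ hp
    simp only [mem_sigma, Nat.mem_divisors, mem_Ioo] at hp
    obtain ⟨⟨⟨k, rfl⟩, hn⟩, hi, hik⟩ := hp
    have hd : 0 < d := Nat.pos_of_ne_zero (left_ne_zero_of_mul hn)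
    rw [Nat.mul_div_cancel_left _ hd] at hik ⊢
    simp only [mem_filter, mem_solutions, and_true]
    refine ⟨hd, hd, hi, by omega, ?_⟩
    rw [← mul_add, Nat.add_sub_cancel' hik.le]

theorem sum_Ioo_mul_sub_sq (m : ℕ) :
    ∑ i ∈ Ioo 0 m, (i : ℚ) * ((m - i : ℕ) : ℚ) ^ 2 = ((m : ℚ) ^ 4 - (m : ℚ) ^ 2) / 12 := by
  have h_range : ∀ (k : ℕ) (c : ℚ), ∑ i ∈ range k, (i : ℚ) * (c - i) ^ 2 =
      c ^ 2 * k * (k - 1) / 2 - c * k * (k - 1) * (2 * k - 1) / 3 + (k * (k - 1) / 2) ^ 2 := by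
    intro k c
    induction k with
    | zero => simp
    | succ k ih => rw [sum_range_succ, ih]; push_cast; ring
  calc ∑ i ∈ Ioo 0 m, (i : ℚ) * ((m - i : ℕ) : ℚ) ^ 2
      = ∑ i ∈ range m, (i : ℚ) * ((m : ℚ) - i) ^ 2 := by
        refine sum_subset_zero_on_sdiff (fun i hi => ?_) (fun i hi => ?_) (fun i hi => ?_)
        · simp only [mem_Ioo, mem_range] at hi ⊢
          exact hi.2
        · simp only [mem_sdiff, mem_Ioo, mem_range] at hi
          simp [show i = 0 by omega]
        · rw [Nat.cast_sub (mem_Ioo.mp hi).2.le]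
    _ = ((m : ℚ) ^ 4 - (m : ℚ) ^ 2) / 12 := by rw [h_range]; ring

theorem cast_sigmaFn (k n : ℕ) : (sigmaFn k n : ℚ) = ∑ d ∈ n.divisors, (d : ℚ) ^ k := by
  push_cast [sigmaFn]
  rfl

theorem sum_filter_coeffs_eq_mul_sq (n : ℕ) :
    ∑ v ∈ solutions n with v.1 = v.2.1, (v.2.2.1 : ℚ) * (v.2.2.2 : ℚ) ^ 2 =
      ((sigmaFn 4 n : ℚ) - sigmaFn 2 n) / 12 := by
  rw [sum_filter_coeffs_eq_eq_sum_divisors]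
  simp only [sum_Ioo_mul_sub_sq]
  rw [Nat.sum_div_divisors n fun m => ((m : ℚ) ^ 4 - (m : ℚ) ^ 2) / 12, ← sum_div,
    sum_sub_distrib, cast_sigmaFn, cast_sigmaFn]

theorem sum_filter_vars_eq_mul_sq (n : ℕ) :
    ∑ v ∈ solutions n with v.2.2.1 = v.2.2.2, (v.2.2.1 : ℚ) * (v.2.2.2 : ℚ) ^ 2 =
      n * sigmaFn 2 n - sigmaFn 3 n := by
  rw [sum_filter_solutions_transpose, sum_filter_coeffs_eq_eq_sum_divisors, cast_sigmaFn,
    cast_sigmaFn, mul_sum, ← sum_sub_distrib]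
  refine sum_congr rfl fun d hd => ?_
  obtain ⟨hdn, hn⟩ := Nat.mem_divisors.mp hd
  have hd0 : (d : ℚ) ≠ 0 := Nat.cast_ne_zero.mpr (Nat.pos_of_mem_divisors hd).ne'
  have h_quot : 1 ≤ n / d := Nat.div_pos (Nat.divisor_le hd) (Nat.pos_of_mem_divisors hd)
  simp only [sum_const, Nat.card_Ioo, nsmul_eq_mul, Nat.sub_zero]
  rw [Nat.cast_sub h_quot, Nat.cast_div hdn hd0]
  field_simp
  ring

theorem two_mul_sum_filter_vars_gt_mul_sq (n : ℕ) :
    2 * ∑ v ∈ solutions n with v.2.2.2 < v.2.2.1, (v.2.2.1 : ℚ) * (v.2.2.2 : ℚ) ^ 2 =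
      ∑ v ∈ solutions n with v.1 = v.2.1, (v.2.2.1 : ℚ) * (v.2.2.2 : ℚ) ^ 2 -
        ∑ v ∈ solutions n with v.2.2.1 = v.2.2.2, (v.2.2.1 : ℚ) * (v.2.2.2 : ℚ) ^ 2 := by
  have h_split_xy := sum_eq_sum_filter_lt_add_sum_filter_eq_add_sum_filter_gt (solutions n)
    (fun v => v.2.2.1) (fun v => v.2.2.2) fun v => (v.2.2.1 : ℚ) * (v.2.2.2 : ℚ) ^ 2
  have h_split_ab := sum_eq_sum_filter_lt_add_sum_filter_eq_add_sum_filter_gt (solutions n)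
    (fun v => v.1) (fun v => v.2.1) fun v => (v.2.2.1 : ℚ) * (v.2.2.2 : ℚ) ^ 2
  have h_swap_xy := sum_filter_solutions_swap n (fun v => v.2.2.1 < v.2.2.2)
    fun v => (v.2.2.1 : ℚ) * (v.2.2.2 : ℚ) ^ 2
  have h_swap_ab := sum_filter_solutions_swap n (fun v => v.2.1 < v.1)
    fun v => (v.2.2.1 : ℚ) * (v.2.2.2 : ℚ) ^ 2
  have h_shear_xy2 : ∑ v ∈ solutions n with v.2.2.2 < v.2.2.1, (v.2.2.1 : ℚ) * (v.2.2.2 : ℚ) ^ 2 =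
      ∑ v ∈ solutions n with v.1 < v.2.1, (v.2.2.1 : ℚ) * (v.2.2.2 : ℚ) ^ 2 +
        ∑ v ∈ solutions n with v.1 < v.2.1, (v.2.2.2 : ℚ) ^ 3 := by
    rw [sum_filter_vars_gt_eq_sum_filter_coeffs_lt n fun x y => (x : ℚ) * (y : ℚ) ^ 2,
      ← sum_add_distrib]
    exact sum_congr rfl fun v _ => by push_cast; ring
  have h_shear_x2y : ∑ v ∈ solutions n with v.2.2.2 < v.2.2.1, (v.2.2.2 : ℚ) * (v.2.2.1 : ℚ) ^ 2 =
      ∑ v ∈ solutions n with v.1 < v.2.1, (v.2.2.2 : ℚ) * (v.2.2.1 : ℚ) ^ 2 +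
        2 * ∑ v ∈ solutions n with v.1 < v.2.1, (v.2.2.1 : ℚ) * (v.2.2.2 : ℚ) ^ 2 +
        ∑ v ∈ solutions n with v.1 < v.2.1, (v.2.2.2 : ℚ) ^ 3 := by
    rw [sum_filter_vars_gt_eq_sum_filter_coeffs_lt n fun x y => (y : ℚ) * (x : ℚ) ^ 2, mul_sum,
      ← sum_add_distrib, ← sum_add_distrib]
    exact sum_congr rfl fun v _ => by push_cast; ring
  linarith

end Liouville

theorem sum_kl_sq_eq_general (n : ℕ) :
    (∑ v ∈ (Finset.Icc 1 n ×ˢ Finset.Icc 1 n ×ˢ Finset.Icc 1 n ×ˢ Finset.Icc 1 n).filter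
        (fun v : ℕ × ℕ × ℕ × ℕ => v.2.2.2 < v.2.2.1 ∧
          v.1 * v.2.2.1 + v.2.1 * v.2.2.2 = n),
      ((v.2.2.1 : ℚ) * (v.2.2.2 : ℚ) ^ 2))
    = (1 / 24) * sigmaFn 4 n + (1 / 2) * sigmaFn 3 n -
        ((12 * (n : ℚ) + 1) / 24) * sigmaFn 2 n := by
  have h_set : (Finset.Icc 1 n ×ˢ Finset.Icc 1 n ×ˢ Finset.Icc 1 n ×ˢ Finset.Icc 1 n).filter
        (fun v : ℕ × ℕ × ℕ × ℕ => v.2.2.2 < v.2.2.1 ∧ v.1 * v.2.2.1 + v.2.1 * v.2.2.2 = n) =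
      (Liouville.solutions n).filter fun v => v.2.2.2 < v.2.2.1 := by
    rw [Liouville.solutions, filter_filter]
    exact filter_congr fun _ _ => and_comm
  have h_two_mul := Liouville.two_mul_sum_filter_vars_gt_mul_sq n
  rw [Liouville.sum_filter_coeffs_eq_mul_sq, Liouville.sum_filter_vars_eq_mul_sq] at h_two_mul
  rw [h_set]
  linarith

theorem sum_kl_sq_eq (n : ℕ) (hn : 0 < n) :
    (∑ v ∈ (Finset.Icc 1 n ×ˢ Finset.Icc 1 n ×ˢ Finset.Icc 1 n ×ˢ Finset.Icc 1 n).filter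
        (fun v : ℕ × ℕ × ℕ × ℕ => v.2.2.2 < v.2.2.1 ∧
          v.1 * v.2.2.1 + v.2.1 * v.2.2.2 = n),
      ((v.2.2.1 : ℚ) * (v.2.2.2 : ℚ) ^ 2))
    = (1 / 24) * sigmaFn 4 n + (1 / 2) * sigmaFn 3 n -
        ((12 * (n : ℚ) + 1) / 24) * sigmaFn 2 n :=
  sum_kl_sq_eq_general n
end
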